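/- Coherence-distinguishability trade-off (key step): let {|ψ_i⟩}_{i=0}^{d-1} be an orthonormal basis of ℂ^d and let N be an MIO channel such that N(|ψ_i⟩⟨ψ_i|) = |i⟩⟨i| ⊗ σ_i for i = 0,…,k−1 and N(|ψ_j⟩⟨ψ_j|) = (Σ_{n=0}^{k-1} q_n^j |n⟩⟨n|) ⊗ ρ_j for j = k,…,d−1, where σ_i, ρ_j are density matrices on ℂ^d and Σ_n q_n^j = 1. Then for each i < k, the (unnormalized) matrix σ_i + Σ_{j=k}^{d-1} q_i^j ρ_j is diagonal, and consequently C_R(σ_i) ≤ Σ_{j=k}^{d-1} q_i^j. -/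

import Mathlib

open Matrix ComplexOrder Kronecker

/-- A density matrix: positive semidefinite with unit trace. -/
def IsDensity {n : Type*} [Fintype n] [DecidableEq n] (ρ : Matrix n n ℂ) : Prop :=
  ρ.PosSemidef ∧ ρ.trace = 1

/-- Completely positive trace-preserving maps, via Kraus decompositions. -/
def IsCPTP {n m : Type*} [Fintype n] [DecidableEq n] [Fintype m] [DecidableEq m]
    (N : Matrix n n ℂ → Matrix m m ℂ) : Prop :=
  ∃ (r : ℕ) (K : Fin r → Matrix m n ℂ),
    (∀ X, N X = ∑ i, K i * X * (K i)ᴴ) ∧ ∑ i, (K i)ᴴ * K i = 1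

/-- Maximally incoherent operations: CPTP maps sending every diagonal density matrix
to a diagonal density matrix. -/
def IsMIO {n m : Type*} [Fintype n] [DecidableEq n] [Fintype m] [DecidableEq m]
    (N : Matrix n n ℂ → Matrix m m ℂ) : Prop :=
  IsCPTP N ∧ ∀ ρ, IsDensity ρ → ρ.IsDiag → (N ρ).IsDiag

/-- Robustness of coherence:
`C_R(ρ) = min{ λ : ρ ≤ λτ, τ incoherent density matrix } − 1`. -/
noncomputable def CR {n : Type*} [Fintype n] [DecidableEq n] (ρ : Matrix n n ℂ) : ℝ :=
  sInf {l : ℝ | ∃ τ : Matrix n n ℂ, IsDensity τ ∧ τ.IsDiag ∧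
    ((l : ℂ) • τ - ρ).PosSemidef} - 1

lemma psd_add' {n : Type*} [Fintype n] {A B : Matrix n n ℂ}
    (hA : A.PosSemidef) (hB : B.PosSemidef) : (A + B).PosSemidef := by
  refine Matrix.PosSemidef.of_dotProduct_mulVec_nonneg (hA.1.add hB.1) fun x => ?_
  rw [add_mulVec, dotProduct_add]
  exact add_nonneg (hA.dotProduct_mulVec_nonneg x) (hB.dotProduct_mulVec_nonneg x)

lemma psd_smul' {n : Type*} [Fintype n] {A : Matrix n n ℂ} {c : ℝ}
    (hA : A.PosSemidef) (hc : 0 ≤ c) : ((c : ℂ) • A).PosSemidef := by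
  refine Matrix.PosSemidef.of_dotProduct_mulVec_nonneg ?_ fun x => ?_
  · unfold Matrix.IsHermitian
    rw [conjTranspose_smul, hA.1]
    congr 1
    simp [Complex.conj_ofReal]
  · rw [smul_mulVec, dotProduct_smul, smul_eq_mul]
    exact mul_nonneg (by exact_mod_cast hc) (hA.dotProduct_mulVec_nonneg x)

lemma psd_sum' {n ι : Type*} [Fintype n] (s : Finset ι) (f : ι → Matrix n n ℂ)
    (h : ∀ j ∈ s, (f j).PosSemidef) : (∑ j ∈ s, f j).PosSemidef :=
  Finset.sum_induction f _ (fun _ _ ha hb => psd_add' ha hb) Matrix.PosSemidef.zero h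

lemma psd_diag_nonneg' {n : Type*} [Fintype n] [DecidableEq n] {A : Matrix n n ℂ}
    (hA : A.PosSemidef) (a : n) : 0 ≤ A a a := by
  have := hA.dotProduct_mulVec_nonneg (Pi.single a 1)
  simpa [dotProduct, Matrix.mulVec, Pi.single_apply, Finset.sum_ite_eq] using this

lemma completeness' {d : ℕ} (ψ : Fin d → (Fin d → ℂ))
    (hortho : ∀ i j, star (ψ i) ⬝ᵥ ψ j = if i = j then 1 else 0) :
    ∑ j, Matrix.vecMulVec (ψ j) (star (ψ j)) = (1 : Matrix (Fin d) (Fin d) ℂ) := by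
  let B : Matrix (Fin d) (Fin d) ℂ := Matrix.of fun a j => ψ j a
  have h1 : Bᴴ * B = 1 := by
    ext a b
    have := hortho a b
    simpa [B, Matrix.mul_apply, Matrix.conjTranspose_apply, Matrix.one_apply, dotProduct] using this
  have h2 : B * Bᴴ = 1 := mul_eq_one_comm.mp h1
  rw [← h2]
  ext a b
  simp [B, Matrix.sum_apply, Matrix.vecMulVec_apply, Matrix.mul_apply, Matrix.conjTranspose_apply]

/-- Key step of the coherence–distinguishability trade-off: if an MIO channel `N`
perfectly discriminates the first `k` states of an orthonormal basis `{|ψ_i⟩}` of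
`ℂ^d`, producing `|i⟩⟨i| ⊗ σ_i`, and sends the remaining basis states to
`(∑ₙ qₙʲ|n⟩⟨n|) ⊗ ρ_j`, then for each `i < k` the matrix
`σ_i + ∑_{j ≥ k} q_iʲ ρ_j` is diagonal, and consequently
`C_R(σ_i) ≤ ∑_{j ≥ k} q_iʲ`. -/
theorem coherence_distinguishability_key_step {d k : ℕ} (hk : k ≤ d)
    (ψ : Fin d → (Fin d → ℂ))
    (hortho : ∀ i j, star (ψ i) ⬝ᵥ ψ j = if i = j then 1 else 0)
    (N : Matrix (Fin d) (Fin d) ℂ → Matrix (Fin k × Fin d) (Fin k × Fin d) ℂ)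
    (hN : IsMIO N)
    (σ : Fin k → Matrix (Fin d) (Fin d) ℂ) (hσ : ∀ i, IsDensity (σ i))
    (q : Fin d → Fin k → ℝ) (hq0 : ∀ j n, 0 ≤ q j n)
    (hq1 : ∀ j : Fin d, k ≤ j.val → ∑ n, q j n = 1)
    (ρ' : Fin d → Matrix (Fin d) (Fin d) ℂ) (hρ' : ∀ j, IsDensity (ρ' j))
    (hlow : ∀ (i : Fin d) (h : i.val < k),
      N (Matrix.vecMulVec (ψ i) (star (ψ i))) =
        Matrix.single (⟨i.val, h⟩ : Fin k) ⟨i.val, h⟩ (1 : ℂ) ⊗ₖ σ ⟨i.val, h⟩)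
    (hhigh : ∀ j : Fin d, k ≤ j.val →
      N (Matrix.vecMulVec (ψ j) (star (ψ j))) =
        (∑ n : Fin k, ((q j n : ℝ) : ℂ) • Matrix.single n n (1 : ℂ)) ⊗ₖ ρ' j) :
    ∀ i : Fin k,
      (σ i + ∑ j ∈ Finset.univ.filter (fun j : Fin d => k ≤ j.val),
        ((q j i : ℝ) : ℂ) • ρ' j).IsDiag ∧
      CR (σ i) ≤ ∑ j ∈ Finset.univ.filter (fun j : Fin d => k ≤ j.val), q j i := by
  obtain ⟨⟨r, K, hNK, -⟩, hMIO⟩ := hN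
  let L : Matrix (Fin d) (Fin d) ℂ →ₗ[ℂ] Matrix (Fin k × Fin d) (Fin k × Fin d) ℂ :=
    { toFun := fun X => ∑ t, K t * X * (K t)ᴴ
      map_add' := by
        intro X Y
        rw [← Finset.sum_add_distrib]
        exact Finset.sum_congr rfl fun t _ => by rw [Matrix.mul_add, Matrix.add_mul]
      map_smul' := by intro c X; simp [Matrix.mul_smul, Matrix.smul_mul, Finset.smul_sum] }
  have hL : ∀ X, N X = L X := hNK
  intro i
  have hkpos : 0 < k := i.pos
  have hdpos : 0 < d := lt_of_lt_of_le hkpos hk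
  set c : ℝ := (d : ℝ)⁻¹ with hc
  have hdne : ((c : ℝ) : ℂ) ≠ 0 := by
    simp only [hc, ne_eq, Complex.ofReal_eq_zero, inv_eq_zero, Nat.cast_eq_zero]
    omega
  have hcnn : (0 : ℝ) ≤ c := by rw [hc]; positivity
  -- N 1 is diagonal
  have hdens : IsDensity (((c : ℝ) : ℂ) • (1 : Matrix (Fin d) (Fin d) ℂ)) := by
    constructor
    · exact psd_smul' Matrix.PosSemidef.one hcnn
    · rw [Matrix.trace_smul, Matrix.trace_one]
      simp only [smul_eq_mul, Fintype.card_fin, hc, Complex.ofReal_inv]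
      have hd0 : ((d : ℕ) : ℂ) ≠ 0 := by
        simp only [ne_eq, Nat.cast_eq_zero]; omega
      push_cast
      field_simp
  have hdiag1 : (N (((c : ℝ) : ℂ) • 1)).IsDiag :=
    hMIO _ hdens (Matrix.isDiag_one.smul _)
  have hNdiag : (N (1 : Matrix (Fin d) (Fin d) ℂ)).IsDiag := by
    intro x y hxy
    have heq : N (((c : ℝ) : ℂ) • 1) = ((c : ℝ) : ℂ) • N 1 := by
      rw [hL, hL, _root_.map_smul]
    have h0 := hdiag1 hxy
    rw [heq, Matrix.smul_apply, smul_eq_mul, mul_eq_zero] at h0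
    exact h0.resolve_left hdne
  -- entrywise formula for N 1 on the i-th block
  have i'lt : (i : ℕ) < d := lt_of_lt_of_le i.2 hk
  set i' : Fin d := ⟨i.val, i'lt⟩ with hi'
  have hentry : ∀ a b : Fin d, (N 1) (i, a) (i, b) =
      σ i a b + ∑ j ∈ Finset.univ.filter (fun j : Fin d => k ≤ j.val),
        ((q j i : ℝ) : ℂ) * ρ' j a b := by
    intro a b
    have hsum : N (1 : Matrix (Fin d) (Fin d) ℂ) =
        ∑ j, N (Matrix.vecMulVec (ψ j) (star (ψ j))) := by
      rw [← completeness' ψ hortho, hL, map_sum]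
      exact Finset.sum_congr rfl fun j _ => (hL _).symm
    rw [hsum, Matrix.sum_apply,
      ← Finset.sum_filter_add_sum_filter_not Finset.univ (fun j : Fin d => k ≤ j.val),
      add_comm]
    congr 1
    · -- low part
      have hterm : ∀ j ∈ Finset.univ.filter (fun j : Fin d => ¬ k ≤ j.val),
          (N (Matrix.vecMulVec (ψ j) (star (ψ j)))) (i, a) (i, b) =
            if j = i' then σ i a b else 0 := by
        intro j hj
        have hjk : j.val < k := by
          simp only [Finset.mem_filter, Finset.mem_univ, true_and, not_le] at hj
          exact hj
        rw [hlow j hjk, Matrix.kroneckerMap_apply]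
        by_cases hji : j = i'
        · subst hji
          have : (⟨i'.val, hjk⟩ : Fin k) = i := by
            apply Fin.ext; rfl
          rw [this]
          simp [Matrix.single_apply_same]
        · have hne : (⟨j.val, hjk⟩ : Fin k) ≠ i := by
            intro h
            apply hji
            apply Fin.ext
            simpa [Fin.ext_iff] using h
          simp [Matrix.single, hne, if_neg hji]
      rw [Finset.sum_congr rfl hterm, Finset.sum_ite_eq' _ i']
      have hmem' : i' ∈ Finset.univ.filter (fun j : Fin d => ¬ k ≤ j.val) :=
        Finset.mem_filter.mpr ⟨Finset.mem_univ _, not_le.mpr i.2⟩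
      rw [if_pos hmem']
    · -- high part
      refine Finset.sum_congr rfl fun j hj => ?_
      have hjk : k ≤ j.val := by
        simp only [Finset.mem_filter, Finset.mem_univ, true_and] at hj
        exact hj
      rw [hhigh j hjk, Matrix.kroneckerMap_apply]
      congr 1
      simp [Matrix.sum_apply, Matrix.smul_apply, Matrix.single, smul_eq_mul,
        mul_ite, mul_one, mul_zero, Finset.sum_ite_eq]
  -- Part 1: the matrix is diagonal
  have hdiagM : (σ i + ∑ j ∈ Finset.univ.filter (fun j : Fin d => k ≤ j.val),
      ((q j i : ℝ) : ℂ) • ρ' j).IsDiag := by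
    intro a b hab
    have hne : ((i, a) : Fin k × Fin d) ≠ (i, b) := by
      simp [Prod.ext_iff, hab]
    have h0 : N 1 (i, a) (i, b) = 0 := hNdiag hne
    rw [hentry a b] at h0
    simpa [Matrix.add_apply, Matrix.sum_apply, Matrix.smul_apply, smul_eq_mul] using h0
  refine ⟨hdiagM, ?_⟩
  -- Part 2
  set F := Finset.univ.filter (fun j : Fin d => k ≤ j.val) with hF
  set S := ∑ j ∈ F, q j i with hS
  have hS0 : 0 ≤ S := Finset.sum_nonneg fun j _ => hq0 j i
  have hlam : (0 : ℝ) < 1 + S := by linarith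
  set M := σ i + ∑ j ∈ F, ((q j i : ℝ) : ℂ) • ρ' j with hM
  have hMtr : M.trace = ((1 + S : ℝ) : ℂ) := by
    rw [hM, Matrix.trace_add, Matrix.trace_sum, (hσ i).2]
    have : ∀ j ∈ F, (((q j i : ℝ) : ℂ) • ρ' j).trace = ((q j i : ℝ) : ℂ) := by
      intro j _
      rw [Matrix.trace_smul, (hρ' j).2, smul_eq_mul, mul_one]
    rw [Finset.sum_congr rfl this]
    push_cast [hS]
    ring
  have hMpsd : M.PosSemidef :=
    psd_add' (hσ i).1 (psd_sum' _ _ fun j _ => psd_smul' (hρ' j).1 (hq0 j i))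
  have hmem : (1 + S) ∈ {l : ℝ | ∃ τ : Matrix (Fin d) (Fin d) ℂ, IsDensity τ ∧ τ.IsDiag ∧
      ((l : ℂ) • τ - σ i).PosSemidef} := by
    refine ⟨(((1 + S)⁻¹ : ℝ) : ℂ) • M, ⟨⟨psd_smul' hMpsd (by positivity), ?_⟩,
      hdiagM.smul _, ?_⟩⟩
    · rw [Matrix.trace_smul, hMtr, smul_eq_mul, ← Complex.ofReal_mul,
        inv_mul_cancel₀ (ne_of_gt hlam), Complex.ofReal_one]
    · have hrw : ((1 + S : ℝ) : ℂ) • ((((1 + S)⁻¹ : ℝ) : ℂ) • M) = M := by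
        rw [smul_smul, ← Complex.ofReal_mul, mul_inv_cancel₀ (ne_of_gt hlam),
          Complex.ofReal_one, one_smul]
      rw [hrw, hM, add_sub_cancel_left]
      exact psd_sum' _ _ fun j _ => psd_smul' (hρ' j).1 (hq0 j i)
  have hbdd : BddBelow {l : ℝ | ∃ τ : Matrix (Fin d) (Fin d) ℂ, IsDensity τ ∧ τ.IsDiag ∧
      ((l : ℂ) • τ - σ i).PosSemidef} := by
    refine ⟨1, fun l hl => ?_⟩
    obtain ⟨τ, hτd, -, hpsd⟩ := hl
    have htr : ((l : ℂ) • τ - σ i).trace = (((l - 1 : ℝ)) : ℂ) := by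
      rw [Matrix.trace_sub, Matrix.trace_smul, hτd.2, (hσ i).2, smul_eq_mul, mul_one]
      push_cast
      ring
    have h0 : 0 ≤ ((l : ℂ) • τ - σ i).trace := by
      rw [Matrix.trace]
      exact Finset.sum_nonneg fun a _ => psd_diag_nonneg' hpsd a
    rw [htr] at h0
    have : (0 : ℝ) ≤ l - 1 := by exact_mod_cast h0
    linarith
  have hinf := csInf_le hbdd hmem
  rw [CR]
  linarith
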